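/- arXiv:2104.10537 — 6 statements merged into one kernel-verified Lean document; each statement's English description precedes it below -/
import Mathlib

section
/- Fix x ≥ 0 and 0 < t₁ < t₂. If τ₁ is any minimizer of τ ↦ G(τ,x,t₁) over [0,∞) and τ₂ is any minimizer of τ ↦ G(τ,x,t₂) over [0,∞), then τ₁ ≤ τ₂. In particular, τ_*(x,t) and τ^*(x,t) are monotonically increasing in t for fixed x, and τ^*(x,t₁) ≤ τ_*(x,t₂). -/
open MeasureTheory Set Filter

noncomputable def Fpot (ρ0 u0 : ℝ → ℝ) (y x t : ℝ) : ℝ :=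
  ∫ η in (0:ℝ)..y, (t * u0 η + η - x) * ρ0 η

noncomputable def Gpot (ρb ub : ℝ → ℝ) (τ x t : ℝ) : ℝ :=
  ∫ η in (0:ℝ)..τ, (x - ub η * (t - η)) * (ρb η * ub η)

/-- `a` minimizes `f` over `[0, ∞)`. -/
def MinimizesOn (f : ℝ → ℝ) (a : ℝ) : Prop :=
  0 ≤ a ∧ ∀ b, 0 ≤ b → f a ≤ f b

/-- `a` is the smallest minimizer of `f` over `[0, ∞)`. -/
def SmallestMinimizer (f : ℝ → ℝ) (a : ℝ) : Prop :=
  MinimizesOn f a ∧ ∀ b, MinimizesOn f b → a ≤ b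

/-- `a` is the largest minimizer of `f` over `[0, ∞)`. -/
def LargestMinimizer (f : ℝ → ℝ) (a : ℝ) : Prop :=
  MinimizesOn f a ∧ ∀ b, MinimizesOn f b → b ≤ a

/-- `v` is the (attained) minimum value of `f` over `[0, ∞)`. -/
def IsMinValue (f : ℝ → ℝ) (v : ℝ) : Prop :=
  (∃ a, 0 ≤ a ∧ f a = v) ∧ ∀ b, 0 ≤ b → v ≤ f b

/-!
Since `t ↦ G(τ, x, t)` is affine with slope `-H(τ)`, where `H(τ) = ∫₀^τ u_b² ρ_b` is strictly
increasing, `G(·, x, t₁) - G(·, x, t₂) = (t₂ - t₁) H` is strictly increasing. Adding the two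
minimality inequalities `G(τ₁, x, t₁) ≤ G(τ₂, x, t₁)` and `G(τ₂, x, t₂) ≤ G(τ₁, x, t₂)` gives
`(t₂ - t₁) H(τ₁) ≤ (t₂ - t₁) H(τ₂)`, hence `τ₁ ≤ τ₂`.
-/

theorem MinimizesOn.le_of_strictMonoOn_sub {f g : ℝ → ℝ} {a b : ℝ} (ha : MinimizesOn f a)
    (hb : MinimizesOn g b) (hfg : StrictMonoOn (fun τ => f τ - g τ) (Ici 0)) : a ≤ b := by
  by_contra! hba
  have := hfg hb.1 ha.1 hba
  linarith [ha.2 b hb.1, hb.2 a ha.1]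

theorem intervalIntegrable_of_abs_le {f : ℝ → ℝ} {a b M : ℝ} (hab : a ≤ b) (hf : Measurable f)
    (hM : ∀ η ∈ Icc a b, |f η| ≤ M) : IntervalIntegrable f volume a b := by
  rw [intervalIntegrable_iff_integrableOn_Icc_of_le hab]
  refine Measure.integrableOn_of_bounded measure_Icc_lt_top.ne hf.aestronglyMeasurable
    (M := M) ?_
  filter_upwards [ae_restrict_mem measurableSet_Icc] with η hη using hM η hη

theorem strictMonoOn_integral_of_pos {f : ℝ → ℝ}
    (hf : ∀ τ, 0 ≤ τ → IntervalIntegrable f volume 0 τ) (hpos : ∀ η, 0 < η → 0 < f η) :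
    StrictMonoOn (fun τ => ∫ η in (0:ℝ)..τ, f η) (Ici 0) := by
  intro a ha b hb hab
  have hsplit : (∫ η in (0:ℝ)..b, f η) - ∫ η in (0:ℝ)..a, f η = ∫ η in a..b, f η :=
    intervalIntegral.integral_interval_sub_left (hf b hb) (hf a ha)
  have hab_pos : 0 < ∫ η in a..b, f η :=
    intervalIntegral.intervalIntegral_pos_of_pos_on ((hf a ha).symm.trans (hf b hb))
      (fun η hη => hpos η (ha.trans_lt hη.1)) hab
  dsimp only
  linarith

theorem Gpot_sub_Gpot {ρb ub : ℝ → ℝ} {τ : ℝ} (x s t : ℝ)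
    (hw : IntervalIntegrable (fun η => ρb η * ub η) volume 0 τ)
    (hv : IntervalIntegrable (fun η => ub η * (ρb η * ub η)) volume 0 τ) :
    Gpot ρb ub τ x s - Gpot ρb ub τ x t = (t - s) * ∫ η in (0:ℝ)..τ, ub η * (ρb η * ub η) := by
  have hint : ∀ r, IntervalIntegrable (fun η => (x - ub η * (r - η)) * (ρb η * ub η)) volume 0 τ
  · intro r
    have := (hw.const_mul x).sub (hv.continuousOn_mul (g := fun η => r - η) (by fun_prop))
    refine this.congr fun η _ => ?_
    ring
  unfold Gpot
  rw [← intervalIntegral.integral_sub (hint s) (hint t), ← intervalIntegral.integral_const_mul]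
  congr 1
  funext η
  ring

theorem stmt0_general
    (ρb ub : ℝ → ℝ)
    (hρbmeas : Measurable ρb) (hubmeas : Measurable ub)
    (hρbpos : ∀ η, 0 ≤ η → 0 < ρb η)
    (hubpos : ∀ η, 0 ≤ η → 0 < ub η)
    (hρbloc : ∀ K : ℝ, ∃ M : ℝ, ∀ η ∈ Set.Icc (0:ℝ) K, ρb η ≤ M)
    (hubbdd : ∃ M : ℝ, ∀ η, 0 ≤ η → |ub η| ≤ M)
    (x t₁ t₂ τ₁ τ₂ : ℝ)
    (ht : t₁ < t₂)
    (hτ₁ : MinimizesOn (fun τ => Gpot ρb ub τ x t₁) τ₁)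
    (hτ₂ : MinimizesOn (fun τ => Gpot ρb ub τ x t₂) τ₂) :
    τ₁ ≤ τ₂ := by
  obtain ⟨Mu, hMu⟩ := hubbdd
  have hw : ∀ τ, 0 ≤ τ → IntervalIntegrable (fun η => ρb η * ub η) volume 0 τ ∧
      IntervalIntegrable (fun η => ub η * (ρb η * ub η)) volume 0 τ := by
    intro τ hτ
    obtain ⟨Mρ, hMρ⟩ := hρbloc τ
    have hw_le : ∀ η ∈ Icc 0 τ, |ρb η * ub η| ≤ Mρ * Mu := fun η hη => by
      rw [abs_mul, abs_of_pos (hρbpos η hη.1)]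
      exact mul_le_mul (hMρ η hη) (hMu η hη.1) (abs_nonneg _)
        ((hρbpos η hη.1).le.trans (hMρ η hη))
    refine ⟨intervalIntegrable_of_abs_le hτ (hρbmeas.mul hubmeas) hw_le,
      intervalIntegrable_of_abs_le (M := Mu * (Mρ * Mu)) hτ (hubmeas.mul (hρbmeas.mul hubmeas))
        fun η hη => ?_⟩
    rw [abs_mul]
    exact mul_le_mul (hMu η hη.1) (hw_le η hη) (abs_nonneg _) ((abs_nonneg _).trans (hMu η hη.1))
  have hH := strictMonoOn_integral_of_pos (fun τ hτ => (hw τ hτ).2)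
    fun η hη => mul_pos (hubpos η hη.le) (mul_pos (hρbpos η hη.le) (hubpos η hη.le))
  refine hτ₁.le_of_strictMonoOn_sub hτ₂ fun a ha b hb hab => ?_
  simp only [Gpot_sub_Gpot x t₁ t₂ (hw a ha).1 (hw a ha).2,
    Gpot_sub_Gpot x t₁ t₂ (hw b hb).1 (hw b hb).2]
  exact mul_lt_mul_of_pos_left (hH ha hb hab) (sub_pos.2 ht)

theorem stmt0
    (ρ0 u0 ρb ub : ℝ → ℝ)
    (hρ0meas : Measurable ρ0) (hu0meas : Measurable u0)
    (hρbmeas : Measurable ρb) (hubmeas : Measurable ub)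
    (hρ0pos : ∀ η, 0 ≤ η → 0 < ρ0 η)
    (hρbpos : ∀ η, 0 ≤ η → 0 < ρb η)
    (hubpos : ∀ η, 0 ≤ η → 0 < ub η)
    (hρ0loc : ∀ K : ℝ, ∃ M : ℝ, ∀ η ∈ Set.Icc (0:ℝ) K, ρ0 η ≤ M)
    (hρbloc : ∀ K : ℝ, ∃ M : ℝ, ∀ η ∈ Set.Icc (0:ℝ) K, ρb η ≤ M)
    (hu0bdd : ∃ M : ℝ, ∀ η, 0 ≤ η → |u0 η| ≤ M)
    (hubbdd : ∃ M : ℝ, ∀ η, 0 ≤ η → |ub η| ≤ M)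
    (x t₁ t₂ τ₁ τ₂ : ℝ)
    (hx : 0 ≤ x) (ht₁ : 0 < t₁) (ht : t₁ < t₂)
    (hτ₁ : MinimizesOn (fun τ => Gpot ρb ub τ x t₁) τ₁)
    (hτ₂ : MinimizesOn (fun τ => Gpot ρb ub τ x t₂) τ₂) :
    τ₁ ≤ τ₂ :=
  stmt0_general ρb ub hρbmeas hubmeas hρbpos hubpos hρbloc hubbdd x t₁ t₂ τ₁ τ₂ ht hτ₁ hτ₂
end

section
/- Fix x ≥ 0 and t > 0, and let ŷ be a minimizer of y ↦ F(y,x,t) over [0,∞). Then for any point (x′,t′) lying strictly between (ŷ,0) and (x,t) on the line segment joining them, one has F(y,x′,t′) > F(ŷ,x′,t′) for every y ≥ 0 with y ≠ ŷ; that is, ŷ is the unique minimizer of y ↦ F(y,x′,t′). -/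
open MeasureTheory Set Filter

/-!
`F(y, x, t)` is affine in `(x, t)`, so on the segment
`F(·, x', t') = (1 - θ) F(·, ŷ, 0) + θ F(·, x, t)`. The second term is minimized at `ŷ` by
assumption, and the first, `∫₀^y (η - ŷ) ρ₀(η) dη`, is strictly minimized at `ŷ` because its
integrand has the sign of `η - ŷ`.
-/

lemma integrableOn_Icc_zero_of_abs_le {f : ℝ → ℝ} (hf : Measurable f)
    (hbdd : ∀ K, ∃ C, ∀ η ∈ Icc (0 : ℝ) K, |f η| ≤ C) (K : ℝ) :
    IntegrableOn f (Icc 0 K) := by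
  obtain ⟨C, hC⟩ := hbdd K
  refine Measure.integrableOn_of_bounded (M := C) measure_Icc_lt_top.ne
    hf.aestronglyMeasurable ?_
  exact (ae_restrict_iff' measurableSet_Icc).2 (ae_of_all _ hC)

lemma intervalIntegrable_of_integrableOn_Icc_zero {f : ℝ → ℝ}
    (hf : ∀ K, IntegrableOn f (Icc 0 K)) {a b : ℝ} (ha : 0 ≤ a) (hb : 0 ≤ b) :
    IntervalIntegrable f volume a b :=
  ((hf (max a b)).mono_set
    (uIcc_subset_Icc ⟨ha, le_max_left a b⟩ ⟨hb, le_max_right a b⟩)).intervalIntegrable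

lemma integral_sub_mul_pos {ρ : ℝ → ℝ} {a b : ℝ} (hab : a ≠ b)
    (hρ : IntervalIntegrable ρ volume a b) (hρpos : ∀ η ∈ uIcc a b, 0 < ρ η) :
    0 < ∫ η in a..b, (η - a) * ρ η := by
  have hI : IntervalIntegrable (fun η => (η - a) * ρ η) volume a b :=
    hρ.continuousOn_mul (by fun_prop)
  rcases hab.lt_or_gt with hab | hba
  · refine intervalIntegral.intervalIntegral_pos_of_pos_on hI (fun η hη => ?_) hab
    have := hρpos η (Ioo_subset_Icc_self.trans Icc_subset_uIcc hη)
    nlinarith [hη.1]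
  · rw [intervalIntegral.integral_symm, ← intervalIntegral.integral_neg]
    refine intervalIntegral.intervalIntegral_pos_of_pos_on hI.symm.neg (fun η hη => ?_) hba
    have := hρpos η (Ioo_subset_Icc_self.trans Icc_subset_uIcc' hη)
    nlinarith [hη.2]

section Fpot

variable {ρ u : ℝ → ℝ}

lemma intervalIntegrable_Fpot_integrand {a b : ℝ} (hρ : IntervalIntegrable ρ volume a b)
    (huρ : IntervalIntegrable (fun η => u η * ρ η) volume a b) (x t : ℝ) :
    IntervalIntegrable (fun η => (t * u η + η - x) * ρ η) volume a b := by
  have h : (fun η => (t * u η + η - x) * ρ η) = fun η => t * (u η * ρ η) + (η - x) * ρ η := by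
    ext η; ring
  rw [h]
  exact (huρ.const_mul t).add (hρ.continuousOn_mul (by fun_prop))

lemma Fpot_convex_comb {z : ℝ} (hρ : IntervalIntegrable ρ volume 0 z)
    (huρ : IntervalIntegrable (fun η => u η * ρ η) volume 0 z) (θ x₁ t₁ x₂ t₂ : ℝ) :
    Fpot ρ u z ((1 - θ) * x₁ + θ * x₂) ((1 - θ) * t₁ + θ * t₂) =
      (1 - θ) * Fpot ρ u z x₁ t₁ + θ * Fpot ρ u z x₂ t₂ := by
  unfold Fpot
  rw [← intervalIntegral.integral_const_mul, ← intervalIntegral.integral_const_mul,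
    ← intervalIntegral.integral_add
      ((intervalIntegrable_Fpot_integrand hρ huρ x₁ t₁).const_mul _)
      ((intervalIntegrable_Fpot_integrand hρ huρ x₂ t₂).const_mul _)]
  congr 1
  ext η
  ring

lemma Fpot_self_zero_lt (hρ : ∀ K, IntegrableOn ρ (Icc 0 K)) (hρpos : ∀ η, 0 ≤ η → 0 < ρ η)
    {a z : ℝ} (ha : 0 ≤ a) (hz : 0 ≤ z) (hza : z ≠ a) :
    Fpot ρ u a a 0 < Fpot ρ u z a 0 := by
  have hF : ∀ b, Fpot ρ u b a 0 = ∫ η in 0..b, (η - a) * ρ η := by simp [Fpot]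
  have hI : ∀ {b}, 0 ≤ b → IntervalIntegrable (fun η => (η - a) * ρ η) volume 0 b :=
    fun hb => (intervalIntegrable_of_integrableOn_Icc_zero hρ le_rfl hb).continuousOn_mul
      (by fun_prop)
  rw [← sub_pos, hF, hF, intervalIntegral.integral_interval_sub_left (hI hz) (hI ha)]
  exact integral_sub_mul_pos hza.symm (intervalIntegrable_of_integrableOn_Icc_zero hρ ha hz)
    fun η hη => hρpos η (le_min ha hz |>.trans hη.1)

end Fpot

theorem stmt4_general
    (ρ0 u0 : ℝ → ℝ)
    (hρ0meas : Measurable ρ0) (hu0meas : Measurable u0)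
    (hρ0pos : ∀ η, 0 ≤ η → 0 < ρ0 η)
    (hρ0loc : ∀ K : ℝ, ∃ M : ℝ, ∀ η ∈ Set.Icc (0:ℝ) K, ρ0 η ≤ M)
    (hu0bdd : ∃ M : ℝ, ∀ η, 0 ≤ η → |u0 η| ≤ M)
    (x t yh : ℝ)
    (hyh : MinimizesOn (fun y => Fpot ρ0 u0 y x t) yh)
    (θ x' t' : ℝ) (hθ : θ ∈ Set.Ioo (0:ℝ) 1)
    (hx' : x' = (1 - θ) * yh + θ * x) (ht' : t' = θ * t) :
    ∀ y, 0 ≤ y → y ≠ yh → Fpot ρ0 u0 yh x' t' < Fpot ρ0 u0 y x' t' := by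
  intro y hy hne
  obtain ⟨hyh0, hmin⟩ := hyh
  obtain ⟨M₀, hM₀⟩ := hu0bdd
  have hρI : ∀ K, IntegrableOn ρ0 (Icc 0 K) := integrableOn_Icc_zero_of_abs_le hρ0meas
    fun K => (hρ0loc K).imp fun M hM η hη => by
      rw [abs_of_pos (hρ0pos η hη.1)]; exact hM η hη
  have huρI : ∀ K, IntegrableOn (fun η => u0 η * ρ0 η) (Icc 0 K) :=
    integrableOn_Icc_zero_of_abs_le (hu0meas.mul hρ0meas) fun K => by
      obtain ⟨M, hM⟩ := hρ0loc K
      refine ⟨M₀ * M, fun η hη => ?_⟩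
      rw [abs_mul, abs_of_pos (hρ0pos η hη.1)]
      exact mul_le_mul (hM₀ η hη.1) (hM η hη) (hρ0pos η hη.1).le
        ((abs_nonneg _).trans (hM₀ η hη.1))
  have hsplit : ∀ z, 0 ≤ z → Fpot ρ0 u0 z x' t' =
      (1 - θ) * Fpot ρ0 u0 z yh 0 + θ * Fpot ρ0 u0 z x t := fun z hz => by
    rw [hx', ht', ← Fpot_convex_comb (intervalIntegrable_of_integrableOn_Icc_zero hρI le_rfl hz)
      (intervalIntegrable_of_integrableOn_Icc_zero huρI le_rfl hz)]
    ring_nf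
  have hstrict := Fpot_self_zero_lt (u := u0) hρI hρ0pos hyh0 hy hne
  rw [hsplit y hy, hsplit yh hyh0]
  exact add_lt_add_of_lt_of_le (mul_lt_mul_of_pos_left hstrict (sub_pos.2 hθ.2))
    (mul_le_mul_of_nonneg_left (hmin y hy) hθ.1.le)

theorem stmt4
    (ρ0 u0 ρb ub : ℝ → ℝ)
    (hρ0meas : Measurable ρ0) (hu0meas : Measurable u0)
    (hρbmeas : Measurable ρb) (hubmeas : Measurable ub)
    (hρ0pos : ∀ η, 0 ≤ η → 0 < ρ0 η)
    (hρbpos : ∀ η, 0 ≤ η → 0 < ρb η)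
    (hubpos : ∀ η, 0 ≤ η → 0 < ub η)
    (hρ0loc : ∀ K : ℝ, ∃ M : ℝ, ∀ η ∈ Set.Icc (0:ℝ) K, ρ0 η ≤ M)
    (hρbloc : ∀ K : ℝ, ∃ M : ℝ, ∀ η ∈ Set.Icc (0:ℝ) K, ρb η ≤ M)
    (hu0bdd : ∃ M : ℝ, ∀ η, 0 ≤ η → |u0 η| ≤ M)
    (hubbdd : ∃ M : ℝ, ∀ η, 0 ≤ η → |ub η| ≤ M)
    (x t yh : ℝ) (hx : 0 ≤ x) (ht : 0 < t)
    (hyh : MinimizesOn (fun y => Fpot ρ0 u0 y x t) yh)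
    (θ x' t' : ℝ) (hθ : θ ∈ Set.Ioo (0:ℝ) 1)
    (hx' : x' = (1 - θ) * yh + θ * x) (ht' : t' = θ * t) :
    ∀ y, 0 ≤ y → y ≠ yh → Fpot ρ0 u0 yh x' t' < Fpot ρ0 u0 y x' t' :=
  stmt4_general ρ0 u0 hρ0meas hu0meas hρ0pos hρ0loc hu0bdd x t yh hyh θ x' t' hθ hx' ht'
end

section
/- Fix x > 0 and t > 0, and let τ₁ be a minimizer of τ ↦ G(τ,x,t) over [0,∞). Then for any point (x̄,t̄) lying strictly between (0,τ₁) and (x,t) on the line segment joining them, τ₁ is the unique minimizer of τ ↦ G(τ,x̄,t̄) over [0,∞); that is, G(τ,x̄,t̄) > G(τ₁,x̄,t̄) for every τ ≥ 0 with τ ≠ τ₁. -/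
open MeasureTheory Set Filter

/-!
For fixed `τ` the integrand of `G(τ, x, t)` is affine in `(x, t)`, so `G(τ, ·, ·)` is affine and
`G(τ, x̄, t̄) = θ G(τ, x, t) + (1 - θ) G(τ, 0, τ₁)`. The first term is minimized at `τ₁` by
assumption, and the second one, `∫₀^τ (η - τ₁) ρ_b u_b² dη`, is strictly minimized at `τ₁`
because its integrand changes sign exactly at `τ₁`.
-/

theorem IntervalIntegrable.of_norm_le {E : Type*} [NormedAddCommGroup E] {f : ℝ → E}
    {a b C : ℝ} (hf : AEStronglyMeasurable f volume) (h : ∀ η ∈ uIoc a b, ‖f η‖ ≤ C) :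
    IntervalIntegrable f volume a b :=
  intervalIntegrable_iff.2 <| Measure.integrableOn_of_bounded measure_Ioc_lt_top.ne hf
    (ae_restrict_of_forall_mem measurableSet_uIoc h)

theorem intervalIntegral_sub_mul_pos {w : ℝ → ℝ} {s τ : ℝ}
    (hw : IntervalIntegrable w volume s τ) (hpos : ∀ η ∈ uIoo s τ, 0 < w η) (hne : τ ≠ s) :
    0 < ∫ η in s..τ, (η - s) * w η := by
  have hint : IntervalIntegrable (fun η => (η - s) * w η) volume s τ :=
    hw.continuousOn_mul (by fun_prop)
  rcases hne.lt_or_gt with hlt | hgt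
  · have hneg : 0 < ∫ η in τ..s, -((η - s) * w η) :=
      intervalIntegral.intervalIntegral_pos_of_pos_on hint.symm.neg
        (fun η hη => neg_pos.2 (mul_neg_of_neg_of_pos (sub_neg.2 hη.2)
          (hpos η (mem_uIoo_of_gt hη.1 hη.2)))) hlt
    rw [intervalIntegral.integral_symm]
    simpa only [intervalIntegral.integral_neg] using hneg
  · exact intervalIntegral.intervalIntegral_pos_of_pos_on hint
      (fun η hη => mul_pos (sub_pos.2 hη.1) (hpos η (mem_uIoo_of_lt hη.1 hη.2))) hgt

theorem intervalIntegrable_mul_pow {ρb ub : ℝ → ℝ} (hρb : Measurable ρb) (hub : Measurable ub)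
    (hρb_nonneg : ∀ η, 0 ≤ η → 0 ≤ ρb η)
    (hρb_loc : ∀ K : ℝ, ∃ M : ℝ, ∀ η ∈ Icc (0:ℝ) K, ρb η ≤ M)
    (hub_bdd : ∃ M : ℝ, ∀ η, 0 ≤ η → |ub η| ≤ M) (n : ℕ) {a b : ℝ} (ha : 0 ≤ a) (hb : 0 ≤ b) :
    IntervalIntegrable (fun η => ρb η * ub η ^ n) volume a b := by
  obtain ⟨Mρ, hMρ⟩ := hρb_loc (max a b)
  obtain ⟨Mu, hMu⟩ := hub_bdd
  refine .of_norm_le (C := Mρ * Mu ^ n) (hρb.mul (hub.pow_const n)).aestronglyMeasurable ?_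
  rintro η ⟨hη₁, hη₂⟩
  have hη : 0 ≤ η := (le_min ha hb).trans hη₁.le
  have hρη : ρb η ≤ Mρ := hMρ η ⟨hη, hη₂⟩
  rw [Real.norm_eq_abs, abs_mul, abs_pow, abs_of_nonneg (hρb_nonneg η hη)]
  exact mul_le_mul hρη (pow_le_pow_left₀ (abs_nonneg _) (hMu η hη) n) (by positivity)
    ((hρb_nonneg η hη).trans hρη)

section Gpot

variable {ρb ub : ℝ → ℝ}

theorem Gpot_integrand_eq (x t η : ℝ) :
    (x - ub η * (t - η)) * (ρb η * ub η) = x * (ρb η * ub η) + (η - t) * (ρb η * ub η ^ 2) := by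
  ring

theorem intervalIntegrable_Gpot_integrand {a b : ℝ}
    (hw₁ : IntervalIntegrable (fun η => ρb η * ub η) volume a b)
    (hw₂ : IntervalIntegrable (fun η => ρb η * ub η ^ 2) volume a b) (x t : ℝ) :
    IntervalIntegrable (fun η => (x - ub η * (t - η)) * (ρb η * ub η)) volume a b := by
  simp only [Gpot_integrand_eq]
  exact (hw₁.const_mul x).add (hw₂.continuousOn_mul (by fun_prop))

theorem Gpot_affine {τ : ℝ} (hw₁ : IntervalIntegrable (fun η => ρb η * ub η) volume 0 τ)
    (hw₂ : IntervalIntegrable (fun η => ρb η * ub η ^ 2) volume 0 τ) (θ x t x' t' : ℝ) :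
    Gpot ρb ub τ (θ * x + (1 - θ) * x') (θ * t + (1 - θ) * t') =
      θ * Gpot ρb ub τ x t + (1 - θ) * Gpot ρb ub τ x' t' := by
  have hint := intervalIntegrable_Gpot_integrand hw₁ hw₂
  simp only [Gpot]
  rw [← intervalIntegral.integral_const_mul, ← intervalIntegral.integral_const_mul,
    ← intervalIntegral.integral_add ((hint x t).const_mul θ) ((hint x' t').const_mul (1 - θ))]
  congr 1 with η
  ring

theorem Gpot_zero_self_lt {s τ : ℝ} (hρb_pos : ∀ η, 0 ≤ η → 0 < ρb η)
    (hub_ne : ∀ η, 0 ≤ η → ub η ≠ 0) (hs : 0 ≤ s) (hτ : 0 ≤ τ) (hne : τ ≠ s)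
    (hws : IntervalIntegrable (fun η => ρb η * ub η ^ 2) volume 0 s)
    (hwτ : IntervalIntegrable (fun η => ρb η * ub η ^ 2) volume 0 τ) :
    Gpot ρb ub s 0 s < Gpot ρb ub τ 0 s := by
  have hG : ∀ σ, Gpot ρb ub σ 0 s = ∫ η in (0:ℝ)..σ, (η - s) * (ρb η * ub η ^ 2) := fun σ =>
    intervalIntegral.integral_congr fun η _ => by simp only [Gpot_integrand_eq, zero_mul, zero_add]
  have hint : ∀ σ, IntervalIntegrable (fun η => ρb η * ub η ^ 2) volume 0 σ →
      IntervalIntegrable (fun η => (η - s) * (ρb η * ub η ^ 2)) volume 0 σ :=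
    fun σ hσ => hσ.continuousOn_mul (by fun_prop)
  have hpos : ∀ η ∈ uIoo s τ, 0 < ρb η * ub η ^ 2 := fun η hη =>
    have hη : 0 ≤ η := (le_min hs hτ).trans hη.1.le
    mul_pos (hρb_pos η hη) (sq_pos_of_ne_zero (hub_ne η hη))
  rw [← sub_pos, hG, hG, intervalIntegral.integral_interval_sub_left (hint τ hwτ) (hint s hws)]
  exact intervalIntegral_sub_mul_pos (hws.symm.trans hwτ) hpos hne

end Gpot

theorem stmt5_general
    (ρb ub : ℝ → ℝ)
    (hρbmeas : Measurable ρb) (hubmeas : Measurable ub)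
    (hρbpos : ∀ η, 0 ≤ η → 0 < ρb η)
    (hubpos : ∀ η, 0 ≤ η → 0 < ub η)
    (hρbloc : ∀ K : ℝ, ∃ M : ℝ, ∀ η ∈ Set.Icc (0:ℝ) K, ρb η ≤ M)
    (hubbdd : ∃ M : ℝ, ∀ η, 0 ≤ η → |ub η| ≤ M)
    (x t τ₁ : ℝ)
    (hτ₁ : MinimizesOn (fun τ => Gpot ρb ub τ x t) τ₁)
    (θ xb tb : ℝ) (hθ : θ ∈ Set.Ioo (0:ℝ) 1)
    (hxb : xb = θ * x) (htb : tb = (1 - θ) * τ₁ + θ * t) :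
    ∀ τ, 0 ≤ τ → τ ≠ τ₁ → Gpot ρb ub τ₁ xb tb < Gpot ρb ub τ xb tb := by
  intro τ hτ hne
  have hw : ∀ n : ℕ, ∀ σ, 0 ≤ σ → IntervalIntegrable (fun η => ρb η * ub η ^ n) volume 0 σ :=
    fun n σ hσ => intervalIntegrable_mul_pow hρbmeas hubmeas (fun η hη => (hρbpos η hη).le)
      hρbloc hubbdd n le_rfl hσ
  have hsplit : ∀ σ, 0 ≤ σ →
      Gpot ρb ub σ xb tb = θ * Gpot ρb ub σ x t + (1 - θ) * Gpot ρb ub σ 0 τ₁ := by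
    intro σ hσ
    rw [← Gpot_affine (by simpa using hw 1 σ hσ) (hw 2 σ hσ), hxb, htb]
    congr 1 <;> ring
  rw [hsplit τ₁ hτ₁.1, hsplit τ hτ]
  exact add_lt_add_of_le_of_lt (mul_le_mul_of_nonneg_left (hτ₁.2 τ hτ) hθ.1.le)
    (mul_lt_mul_of_pos_left (Gpot_zero_self_lt hρbpos (fun η hη => (hubpos η hη).ne') hτ₁.1 hτ
      hne (hw 2 τ₁ hτ₁.1) (hw 2 τ hτ)) (sub_pos.2 hθ.2))

theorem stmt5
    (ρ0 u0 ρb ub : ℝ → ℝ)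
    (hρ0meas : Measurable ρ0) (hu0meas : Measurable u0)
    (hρbmeas : Measurable ρb) (hubmeas : Measurable ub)
    (hρ0pos : ∀ η, 0 ≤ η → 0 < ρ0 η)
    (hρbpos : ∀ η, 0 ≤ η → 0 < ρb η)
    (hubpos : ∀ η, 0 ≤ η → 0 < ub η)
    (hρ0loc : ∀ K : ℝ, ∃ M : ℝ, ∀ η ∈ Set.Icc (0:ℝ) K, ρ0 η ≤ M)
    (hρbloc : ∀ K : ℝ, ∃ M : ℝ, ∀ η ∈ Set.Icc (0:ℝ) K, ρb η ≤ M)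
    (hu0bdd : ∃ M : ℝ, ∀ η, 0 ≤ η → |u0 η| ≤ M)
    (hubbdd : ∃ M : ℝ, ∀ η, 0 ≤ η → |ub η| ≤ M)
    (x t τ₁ : ℝ) (hx : 0 < x) (ht : 0 < t)
    (hτ₁ : MinimizesOn (fun τ => Gpot ρb ub τ x t) τ₁)
    (θ xb tb : ℝ) (hθ : θ ∈ Set.Ioo (0:ℝ) 1)
    (hxb : xb = θ * x) (htb : tb = (1 - θ) * τ₁ + θ * t) :
    ∀ τ, 0 ≤ τ → τ ≠ τ₁ → Gpot ρb ub τ₁ xb tb < Gpot ρb ub τ xb tb :=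
  stmt5_general ρb ub hρbmeas hubmeas hρbpos hubpos hρbloc hubbdd x t τ₁ hτ₁ θ xb tb hθ hxb htb
end

section
/- The function (x,t) ↦ F(x,t) = min_{y ≥ 0} F(y,x,t) is locally Lipschitz continuous on [0,∞) × [0,∞), and the function (x,t) ↦ G(x,t) = min_{τ ≥ 0} G(τ,x,t) is locally Lipschitz continuous on [0,∞) × [0,∞). -/
open MeasureTheory Set Filter

/-!
Both potentials are integrals `∫₀^y (a η + x b η + t c η) dη` whose integrands are affine in
`(x, t)` with locally bounded coefficients, so for `y ∈ [0, B]` they are Lipschitz in `(x, t)`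
uniformly in `y`. For `(x, t)` in a bounded set the integrand is nonnegative beyond some `B`, so
the minimum over `y ≥ 0` is a minimum over `y ∈ [0, B]`, and a minimum of uniformly Lipschitz
functions is Lipschitz.
-/

open Metric

def LocallyBoundedOnIci (f : ℝ → ℝ) : Prop :=
  ∀ K, ∃ M, ∀ η ∈ Icc (0:ℝ) K, |f η| ≤ M

namespace LocallyBoundedOnIci

variable {f g : ℝ → ℝ}

lemma of_abs_le {M : ℝ} (h : ∀ η, 0 ≤ η → |f η| ≤ M) : LocallyBoundedOnIci f :=
  fun _ => ⟨M, fun η hη => h η hη.1⟩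

lemma of_nonneg_of_le (h₀ : ∀ η, 0 ≤ η → 0 ≤ f η)
    (h : ∀ K : ℝ, ∃ M : ℝ, ∀ η ∈ Icc (0:ℝ) K, f η ≤ M) : LocallyBoundedOnIci f := fun K =>
  let ⟨M, hM⟩ := h K
  ⟨M, fun η hη => (abs_of_nonneg (h₀ η hη.1)).trans_le (hM η hη)⟩

lemma const (c : ℝ) : LocallyBoundedOnIci fun _ => c :=
  of_abs_le (M := |c|) fun _ _ => le_rfl

lemma id' : LocallyBoundedOnIci fun η => η :=
  fun K => ⟨K, fun _ hη => (abs_of_nonneg hη.1).trans_le hη.2⟩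

lemma neg (hf : LocallyBoundedOnIci f) : LocallyBoundedOnIci fun η => -f η := by
  simpa only [LocallyBoundedOnIci, abs_neg] using hf

lemma add (hf : LocallyBoundedOnIci f) (hg : LocallyBoundedOnIci g) :
    LocallyBoundedOnIci fun η => f η + g η := fun K =>
  let ⟨M, hM⟩ := hf K
  let ⟨N, hN⟩ := hg K
  ⟨M + N, fun η hη => (abs_add_le _ _).trans (add_le_add (hM η hη) (hN η hη))⟩

lemma mul (hf : LocallyBoundedOnIci f) (hg : LocallyBoundedOnIci g) :
    LocallyBoundedOnIci fun η => f η * g η := fun K =>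
  let ⟨M, hM⟩ := hf K
  let ⟨N, hN⟩ := hg K
  ⟨M * N, fun η hη => (abs_mul _ _).trans_le <|
    mul_le_mul (hM η hη) (hN η hη) (abs_nonneg _) ((abs_nonneg _).trans (hM η hη))⟩

lemma intervalIntegrable (hf : LocallyBoundedOnIci f) (hm : Measurable f) {y : ℝ} (hy : 0 ≤ y) :
    IntervalIntegrable f volume 0 y := by
  obtain ⟨M, hM⟩ := hf y
  refine (intervalIntegrable_const (c := M)).mono_fun' hm.aestronglyMeasurable ?_
  rw [uIoc_of_le hy]
  exact (ae_restrict_iff' measurableSet_Ioc).2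
    (ae_of_all _ fun η hη => hM η (Ioc_subset_Icc_self hη))

end LocallyBoundedOnIci

lemma abs_integral_le_mul_of_abs_le {f : ℝ → ℝ} {B M z : ℝ} (hf : ∀ η ∈ Icc 0 B, |f η| ≤ M)
    (hz : z ∈ Icc 0 B) : |∫ η in (0:ℝ)..z, f η| ≤ M * B := by
  have hM : 0 ≤ M := (abs_nonneg _).trans (hf 0 ⟨le_rfl, hz.1.trans hz.2⟩)
  have hsub : uIoc 0 z ⊆ Icc 0 B := by
    rw [uIoc_of_le hz.1]; exact Ioc_subset_Icc_self.trans (Icc_subset_Icc_right hz.2)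
  calc |∫ η in (0:ℝ)..z, f η| ≤ M * |z - 0| :=
        intervalIntegral.norm_integral_le_of_norm_le_const fun η hη =>
          (Real.norm_eq_abs _).trans_le (hf η (hsub hη))
    _ ≤ M * B := by
        rw [sub_zero, abs_of_nonneg hz.1]
        exact mul_le_mul_of_nonneg_left hz.2 hM

lemma integral_le_integral_of_nonneg_of_le {f : ℝ → ℝ} {B y : ℝ} (hB : 0 ≤ B) (hBy : B ≤ y)
    (hfi : IntervalIntegrable f volume 0 y) (hf : ∀ η ∈ Icc B y, 0 ≤ f η) :
    ∫ η in (0:ℝ)..B, f η ≤ ∫ η in (0:ℝ)..y, f η := by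
  have hBmem : B ∈ uIcc 0 y := mem_uIcc_of_le hB hBy
  rw [← intervalIntegral.integral_add_adjacent_intervals
    (hfi.mono_set (uIcc_subset_uIcc left_mem_uIcc hBmem))
    (hfi.mono_set (uIcc_subset_uIcc hBmem right_mem_uIcc))]
  linarith [intervalIntegral.integral_nonneg (μ := volume) hBy hf]

theorem lipschitzOnWith_of_isMinValue {α : Type*} [PseudoMetricSpace α] {P : ℝ → α → ℝ}
    {m : α → ℝ} {S : Set α} {B : ℝ} {K : NNReal} (hB : 0 ≤ B)
    (hmin : ∀ q ∈ S, IsMinValue (fun y => P y q) (m q))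
    (hmono : ∀ q ∈ S, ∀ y, B ≤ y → P B q ≤ P y q)
    (hlip : ∀ z ∈ Icc 0 B, LipschitzOnWith K (P z) S) :
    LipschitzOnWith K m S := by
  refine LipschitzOnWith.of_le_add_mul K fun q hq q' hq' => ?_
  obtain ⟨⟨y, hy, hPy⟩, _⟩ := hmin q' hq'
  have hz : min y B ∈ Icc 0 B := ⟨le_min hy hB, min_le_right _ _⟩
  have hPz : P (min y B) q' ≤ m q' := by
    rcases le_total y B with h | h
    · rw [min_eq_left h, ← hPy]
    · rw [min_eq_right h, ← hPy]
      exact hmono q' hq' y h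
  calc m q ≤ P (min y B) q := (hmin q hq).2 _ hz.1
    _ ≤ P (min y B) q' + K * dist q q' :=
        sub_le_iff_le_add'.1 ((le_abs_self _).trans ((hlip _ hz).dist_le_mul q hq q' hq'))
    _ ≤ m q' + K * dist q q' := by gcongr

section AffinePotential

variable {a b c : ℝ → ℝ}

lemma integral_affine {y : ℝ} (ha : IntervalIntegrable a volume 0 y)
    (hb : IntervalIntegrable b volume 0 y) (hc : IntervalIntegrable c volume 0 y) (x t : ℝ) :
    ∫ η in (0:ℝ)..y, a η + x * b η + t * c η =
      (∫ η in (0:ℝ)..y, a η) + x * (∫ η in (0:ℝ)..y, b η) + t * ∫ η in (0:ℝ)..y, c η := by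
  rw [intervalIntegral.integral_add (ha.add (hb.const_mul x)) (hc.const_mul t),
    intervalIntegral.integral_add ha (hb.const_mul x), intervalIntegral.integral_const_mul,
    intervalIntegral.integral_const_mul]

lemma lipschitzWith_integral_affine {B Mb Mc z : ℝ} (hz : z ∈ Icc 0 B)
    (ha : IntervalIntegrable a volume 0 z) (hb : IntervalIntegrable b volume 0 z)
    (hc : IntervalIntegrable c volume 0 z)
    (hMb : ∀ η ∈ Icc 0 B, |b η| ≤ Mb) (hMc : ∀ η ∈ Icc 0 B, |c η| ≤ Mc) :
    LipschitzWith ((Mb + Mc) * B).toNNReal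
      fun q : ℝ × ℝ => ∫ η in (0:ℝ)..z, a η + q.1 * b η + q.2 * c η := by
  refine LipschitzWith.of_le_add_mul' _ fun q q' => ?_
  simp only [integral_affine ha hb hc]
  have hIb := abs_integral_le_mul_of_abs_le hMb hz
  have hIc := abs_integral_le_mul_of_abs_le hMc hz
  have hx : |q.1 - q'.1| ≤ dist q q' := by
    rw [Prod.dist_eq, ← Real.dist_eq]; exact le_max_left _ _
  have ht : |q.2 - q'.2| ≤ dist q q' := by
    rw [Prod.dist_eq, ← Real.dist_eq]; exact le_max_right _ _
  have hbx : (q.1 - q'.1) * ∫ η in (0:ℝ)..z, b η ≤ dist q q' * (Mb * B) := by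
    refine (le_abs_self _).trans ?_
    rw [abs_mul]; exact mul_le_mul hx hIb (abs_nonneg _) dist_nonneg
  have hct : (q.2 - q'.2) * ∫ η in (0:ℝ)..z, c η ≤ dist q q' * (Mc * B) := by
    refine (le_abs_self _).trans ?_
    rw [abs_mul]; exact mul_le_mul ht hIc (abs_nonneg _) dist_nonneg
  linarith

theorem exists_lipschitzOnWith_of_isMinValue_integral_affine
    (ham : Measurable a) (hbm : Measurable b) (hcm : Measurable c)
    (ha : LocallyBoundedOnIci a) (hb : LocallyBoundedOnIci b) (hc : LocallyBoundedOnIci c)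
    {S : Set (ℝ × ℝ)} {B : ℝ} (hB : 0 ≤ B)
    (hnonneg : ∀ q ∈ S, ∀ η, B ≤ η → 0 ≤ a η + q.1 * b η + q.2 * c η) {m : ℝ × ℝ → ℝ}
    (hm : ∀ q ∈ S, IsMinValue (fun y => ∫ η in (0:ℝ)..y, a η + q.1 * b η + q.2 * c η) (m q)) :
    ∃ K, LipschitzOnWith K m S := by
  obtain ⟨Mb, hMb⟩ := hb B
  obtain ⟨Mc, hMc⟩ := hc B
  refine ⟨((Mb + Mc) * B).toNNReal, lipschitzOnWith_of_isMinValue hB hm ?_ ?_⟩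
  · intro q hq y hBy
    have hf : LocallyBoundedOnIci fun η => a η + q.1 * b η + q.2 * c η :=
      (ha.add ((LocallyBoundedOnIci.const q.1).mul hb)).add ((LocallyBoundedOnIci.const q.2).mul hc)
    exact integral_le_integral_of_nonneg_of_le hB hBy
      (hf.intervalIntegrable (by fun_prop) (hB.trans hBy)) fun η hη => hnonneg q hq η hη.1
  · intro z hz
    exact (lipschitzWith_integral_affine hz (ha.intervalIntegrable ham hz.1)
      (hb.intervalIntegrable hbm hz.1) (hc.intervalIntegrable hcm hz.1) hMb hMc).lipschitzOnWith

end AffinePotential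

lemma lt_add_one_of_mem_ball {p q : ℝ × ℝ} (h : q ∈ ball p 1) :
    q.1 < p.1 + 1 ∧ q.2 < p.2 + 1 := by
  rw [mem_ball, Prod.dist_eq, max_lt_iff, Real.dist_eq, Real.dist_eq] at h
  exact ⟨by linarith [(abs_lt.1 h.1).2], by linarith [(abs_lt.1 h.2).2]⟩

lemma Fpot_eq_integral_affine (ρ0 u0 : ℝ → ℝ) (y x t : ℝ) :
    Fpot ρ0 u0 y x t = ∫ η in (0:ℝ)..y, η * ρ0 η + x * -ρ0 η + t * (u0 η * ρ0 η) := by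
  unfold Fpot; congr 1; ext η; ring

lemma Gpot_eq_integral_affine (ρb ub : ℝ → ℝ) (τ x t : ℝ) :
    Gpot ρb ub τ x t = ∫ η in (0:ℝ)..τ,
      η * (ub η * (ub η * ρb η)) + x * (ρb η * ub η) + t * -(ub η * (ub η * ρb η)) := by
  unfold Gpot; congr 1; ext η; ring

theorem exists_lipschitzOnWith_ball_of_isMinValue_Fpot {ρ0 u0 : ℝ → ℝ}
    (hρ0meas : Measurable ρ0) (hu0meas : Measurable u0) (hρ0pos : ∀ η, 0 ≤ η → 0 < ρ0 η)
    (hρ0loc : ∀ K : ℝ, ∃ M : ℝ, ∀ η ∈ Icc (0:ℝ) K, ρ0 η ≤ M)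
    (hu0bdd : ∃ M : ℝ, ∀ η, 0 ≤ η → |u0 η| ≤ M) {Fm : ℝ → ℝ → ℝ}
    (hFm : ∀ x t, 0 ≤ x → 0 ≤ t → IsMinValue (fun y => Fpot ρ0 u0 y x t) (Fm x t))
    (p : ℝ × ℝ) : ∃ ε > (0:ℝ), ∃ K : NNReal,
      LipschitzOnWith K (fun q : ℝ × ℝ => Fm q.1 q.2) ((Ici 0 ×ˢ Ici 0) ∩ ball p ε) := by
  obtain ⟨M, hM⟩ := hu0bdd
  have hM0 : 0 ≤ M := (abs_nonneg _).trans (hM 0 le_rfl)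
  have hρ := LocallyBoundedOnIci.of_nonneg_of_le (fun η hη => (hρ0pos η hη).le) hρ0loc
  -- beyond `B` the integrand `(t u0 + η - x) ρ0` is nonnegative for every `(x, t)` in the ball
  set B := |p.1| + 1 + (|p.2| + 1) * M
  have hB : 0 ≤ B := by positivity
  refine ⟨1, one_pos, exists_lipschitzOnWith_of_isMinValue_integral_affine
    (a := fun η => η * ρ0 η) (b := fun η => -ρ0 η) (c := fun η => u0 η * ρ0 η)
    (by fun_prop) (by fun_prop) (by fun_prop) (LocallyBoundedOnIci.id'.mul hρ) hρ.neg
    ((LocallyBoundedOnIci.of_abs_le hM).mul hρ) hB ?_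
    fun q hq => by simpa only [Fpot_eq_integral_affine] using hFm q.1 q.2 hq.1.1 hq.1.2⟩
  rintro q ⟨⟨hx, ht⟩, hq⟩ η hη
  obtain ⟨hxp, htp⟩ := lt_add_one_of_mem_ball hq
  have hη0 : 0 ≤ η := hB.trans hη
  have hu := mul_le_mul_of_nonneg_left (abs_le.1 (hM η hη0)).1 ht
  have htM : q.2 * M ≤ (|p.2| + 1) * M :=
    mul_le_mul_of_nonneg_right (by linarith [le_abs_self p.2]) hM0
  have hfactor : 0 ≤ q.2 * u0 η + η - q.1 := by linarith [le_abs_self p.1]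
  calc 0 ≤ (q.2 * u0 η + η - q.1) * ρ0 η := mul_nonneg hfactor (hρ0pos η hη0).le
    _ = _ := by ring

theorem exists_lipschitzOnWith_ball_of_isMinValue_Gpot {ρb ub : ℝ → ℝ}
    (hρbmeas : Measurable ρb) (hubmeas : Measurable ub) (hρbpos : ∀ η, 0 ≤ η → 0 < ρb η)
    (hubpos : ∀ η, 0 ≤ η → 0 < ub η)
    (hρbloc : ∀ K : ℝ, ∃ M : ℝ, ∀ η ∈ Icc (0:ℝ) K, ρb η ≤ M)
    (hubbdd : ∃ M : ℝ, ∀ η, 0 ≤ η → |ub η| ≤ M) {Gm : ℝ → ℝ → ℝ}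
    (hGm : ∀ x t, 0 ≤ x → 0 ≤ t → IsMinValue (fun τ => Gpot ρb ub τ x t) (Gm x t))
    (p : ℝ × ℝ) : ∃ ε > (0:ℝ), ∃ K : NNReal,
      LipschitzOnWith K (fun q : ℝ × ℝ => Gm q.1 q.2) ((Ici 0 ×ˢ Ici 0) ∩ ball p ε) := by
  obtain ⟨M, hM⟩ := hubbdd
  have hρ := LocallyBoundedOnIci.of_nonneg_of_le (fun η hη => (hρbpos η hη).le) hρbloc
  have hu := LocallyBoundedOnIci.of_abs_le hM
  -- beyond `B` the integrand `(x + ub (η - t)) ρb ub` is nonnegative for every `(x, t)` in the ball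
  set B := |p.2| + 1
  have hB : 0 ≤ B := by positivity
  refine ⟨1, one_pos, exists_lipschitzOnWith_of_isMinValue_integral_affine
    (a := fun η => η * (ub η * (ub η * ρb η))) (b := fun η => ρb η * ub η)
    (c := fun η => -(ub η * (ub η * ρb η)))
    (by fun_prop) (by fun_prop) (by fun_prop) (LocallyBoundedOnIci.id'.mul (hu.mul (hu.mul hρ)))
    (hρ.mul hu) (hu.mul (hu.mul hρ)).neg hB ?_
    fun q hq => by simpa only [Gpot_eq_integral_affine] using hGm q.1 q.2 hq.1.1 hq.1.2⟩
  rintro q ⟨⟨hx, -⟩, hq⟩ η hη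
  have htη : q.2 ≤ η := by linarith [(lt_add_one_of_mem_ball hq).2, le_abs_self p.2]
  have hη0 : 0 ≤ η := hB.trans hη
  have hub := (hubpos η hη0).le
  have hfactor : 0 ≤ q.1 + ub η * (η - q.2) := add_nonneg hx (mul_nonneg hub (sub_nonneg.2 htη))
  calc 0 ≤ (q.1 + ub η * (η - q.2)) * (ρb η * ub η) :=
        mul_nonneg hfactor (mul_nonneg (hρbpos η hη0).le hub)
    _ = _ := by ring

theorem stmt6
    (ρ0 u0 ρb ub : ℝ → ℝ)
    (hρ0meas : Measurable ρ0) (hu0meas : Measurable u0)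
    (hρbmeas : Measurable ρb) (hubmeas : Measurable ub)
    (hρ0pos : ∀ η, 0 ≤ η → 0 < ρ0 η)
    (hρbpos : ∀ η, 0 ≤ η → 0 < ρb η)
    (hubpos : ∀ η, 0 ≤ η → 0 < ub η)
    (hρ0loc : ∀ K : ℝ, ∃ M : ℝ, ∀ η ∈ Set.Icc (0:ℝ) K, ρ0 η ≤ M)
    (hρbloc : ∀ K : ℝ, ∃ M : ℝ, ∀ η ∈ Set.Icc (0:ℝ) K, ρb η ≤ M)
    (hu0bdd : ∃ M : ℝ, ∀ η, 0 ≤ η → |u0 η| ≤ M)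
    (hubbdd : ∃ M : ℝ, ∀ η, 0 ≤ η → |ub η| ≤ M)
    (Fm Gm : ℝ → ℝ → ℝ)
    (hFm : ∀ x t, 0 ≤ x → 0 ≤ t → IsMinValue (fun y => Fpot ρ0 u0 y x t) (Fm x t))
    (hGm : ∀ x t, 0 ≤ x → 0 ≤ t → IsMinValue (fun τ => Gpot ρb ub τ x t) (Gm x t))
 :
    (∀ p ∈ Set.Ici (0:ℝ) ×ˢ Set.Ici (0:ℝ), ∃ ε > (0:ℝ), ∃ K : NNReal,
      LipschitzOnWith K (fun q : ℝ × ℝ => Fm q.1 q.2)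
        ((Set.Ici (0:ℝ) ×ˢ Set.Ici (0:ℝ)) ∩ Metric.ball p ε)) ∧
    (∀ p ∈ Set.Ici (0:ℝ) ×ˢ Set.Ici (0:ℝ), ∃ ε > (0:ℝ), ∃ K : NNReal,
      LipschitzOnWith K (fun q : ℝ × ℝ => Gm q.1 q.2)
        ((Set.Ici (0:ℝ) ×ˢ Set.Ici (0:ℝ)) ∩ Metric.ball p ε)) :=
  ⟨fun p _ => exists_lipschitzOnWith_ball_of_isMinValue_Fpot hρ0meas hu0meas hρ0pos hρ0loc hu0bdd
      hFm p,
    fun p _ => exists_lipschitzOnWith_ball_of_isMinValue_Gpot hρbmeas hubmeas hρbpos hubpos hρbloc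
      hubbdd hGm p⟩
end

section
/- Fix t > 0 and suppose the set I(t) = {x ≥ 0 : F(x,t) = G(x,t)} has nonempty interior. Then: (4) for every t′ with 0 < t′ < t, the set I(t′) = {x ≥ 0 : F(x,t′) = G(x,t′)} also has nonempty interior; and (5) the set ⋃_{0 ≤ t′ ≤ t} I(t′) × {t′} ⊆ ℝ² is star-shaped with respect to the origin (0,0). -/
open MeasureTheory Set Filter

/-!
For fixed `y` both potentials are affine in `(x, t)`: `F(y,x,t) = -x A(y) + t B(y) + C(y)` with
`A(y) > 0` for `y > 0` and `C ≥ 0`, and `G(τ,x,t) = x A'(τ) + t B'(τ) + C'(τ)` with `A', C' ≥ 0`.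
Hence both minimum values are `≤ 0` (take `y = 0`), `F` is antitone and `G` monotone in `x`, and
`F(y, λx, λt) = λ F(y,x,t) + (1-λ) C(y)` shows that a zero minimum stays zero along the segment to
the origin (likewise for `G`).

On an interval of interface points at time `t`, `F` is antitone and equal to the monotone `G`,
hence constant; since a nonzero minimum of `F` is attained at some `y > 0`, where `A(y) > 0` makes
`F` strictly decrease in `x`, the common value is `0`. Scaling that interval by `t'/t` gives an open
interval of interface points at time `t'`. An interface point `(x, s)` with `s ≤ t` is squeezed
to value `0` by the zero point `(s/t) x₀` and monotonicity, so it scales towards the origin as well.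
-/

namespace IsMinValue

variable {f g : ℝ → ℝ} {v w : ℝ}

theorem nonpos (h : IsMinValue f v) (h0 : f 0 = 0) : v ≤ 0 :=
  h0 ▸ h.2 0 le_rfl

theorem le_of_le (hf : IsMinValue f v) (hg : IsMinValue g w) (hfg : ∀ b, 0 ≤ b → f b ≤ g b) :
    v ≤ w := by
  obtain ⟨a, ha, rfl⟩ := hg.1
  exact (hf.2 a ha).trans (hfg a ha)

end IsMinValue

def IsAffinePotential (φ : ℝ → ℝ → ℝ → ℝ) (a b c : ℝ → ℝ) : Prop :=
  ∀ y, 0 ≤ y → ∀ x t, φ y x t = x * a y + t * b y + c y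

namespace IsAffinePotential

variable {φ : ℝ → ℝ → ℝ → ℝ} {a b c : ℝ → ℝ} {m : ℝ → ℝ → ℝ}

theorem minValue_mono (hφ : IsAffinePotential φ a b c) (ha : ∀ y, 0 ≤ y → 0 ≤ a y)
    (hm : ∀ x t, 0 ≤ x → 0 ≤ t → IsMinValue (fun y => φ y x t) (m x t))
    {x₁ x₂ t : ℝ} (ht : 0 ≤ t) (hx₁ : 0 ≤ x₁) (hx : x₁ ≤ x₂) : m x₁ t ≤ m x₂ t :=
  (hm x₁ t hx₁ ht).le_of_le (hm x₂ t (hx₁.trans hx) ht) fun y hy => by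
    simp only [hφ y hy]
    linarith [mul_le_mul_of_nonneg_right hx (ha y hy)]

theorem minValue_anti (hφ : IsAffinePotential φ a b c) (ha : ∀ y, 0 ≤ y → a y ≤ 0)
    (hm : ∀ x t, 0 ≤ x → 0 ≤ t → IsMinValue (fun y => φ y x t) (m x t))
    {x₁ x₂ t : ℝ} (ht : 0 ≤ t) (hx₁ : 0 ≤ x₁) (hx : x₁ ≤ x₂) : m x₂ t ≤ m x₁ t :=
  (hm x₂ t (hx₁.trans hx) ht).le_of_le (hm x₁ t hx₁ ht) fun y hy => by
    simp only [hφ y hy]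
    linarith [mul_le_mul_of_nonpos_right hx (ha y hy)]

theorem minValue_add_lt (hφ : IsAffinePotential φ a b c) (ha : ∀ y, 0 < y → a y < 0)
    (h0 : ∀ x t, φ 0 x t = 0)
    (hm : ∀ x t, 0 ≤ x → 0 ≤ t → IsMinValue (fun y => φ y x t) (m x t))
    {x t h : ℝ} (hx : 0 ≤ x) (ht : 0 ≤ t) (hne : m x t ≠ 0) (hh : 0 < h) :
    m (x + h) t < m x t := by
  obtain ⟨y, hy, hyv⟩ := (hm x t hx ht).1
  have hy' : 0 < y := hy.lt_of_ne <| by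
    rintro rfl
    exact hne (hyv.symm.trans (h0 x t))
  calc m (x + h) t ≤ φ y (x + h) t := (hm (x + h) t (by positivity) ht).2 y hy
    _ < φ y x t := by
      rw [hφ y hy, hφ y hy]
      linarith [mul_neg_of_pos_of_neg hh (ha y hy')]
    _ = m x t := hyv

theorem minValue_smul_eq_zero (hφ : IsAffinePotential φ a b c) (hc : ∀ y, 0 ≤ y → 0 ≤ c y)
    (h0 : ∀ x t, φ 0 x t = 0)
    (hm : ∀ x t, 0 ≤ x → 0 ≤ t → IsMinValue (fun y => φ y x t) (m x t))
    {x t l : ℝ} (hx : 0 ≤ x) (ht : 0 ≤ t) (hzero : m x t = 0) (hl₀ : 0 ≤ l) (hl₁ : l ≤ 1) :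
    m (l * x) (l * t) = 0 := by
  have hml := hm (l * x) (l * t) (mul_nonneg hl₀ hx) (mul_nonneg hl₀ ht)
  refine le_antisymm (hml.nonpos (h0 _ _)) ?_
  obtain ⟨y, hy, hyv⟩ := hml.1
  have hmin : 0 ≤ φ y x t := hzero ▸ (hm x t hx ht).2 y hy
  rw [hφ y hy] at hmin
  calc 0 ≤ l * (x * a y + t * b y + c y) + (1 - l) * c y :=
        add_nonneg (mul_nonneg hl₀ hmin) (mul_nonneg (sub_nonneg.2 hl₁) (hc y hy))
    _ = φ y (l * x) (l * t) := by rw [hφ y hy]; ring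
    _ = m (l * x) (l * t) := hyv

end IsAffinePotential

structure IsInterfacePair (mF mG : ℝ → ℝ → ℝ) : Prop where
  F_nonpos : ∀ x t, 0 ≤ x → 0 ≤ t → mF x t ≤ 0
  G_nonpos : ∀ x t, 0 ≤ x → 0 ≤ t → mG x t ≤ 0
  F_anti : ∀ {x₁ x₂ t}, 0 ≤ t → 0 ≤ x₁ → x₁ ≤ x₂ → mF x₂ t ≤ mF x₁ t
  G_mono : ∀ {x₁ x₂ t}, 0 ≤ t → 0 ≤ x₁ → x₁ ≤ x₂ → mG x₁ t ≤ mG x₂ t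
  F_add_lt : ∀ {x t h}, 0 ≤ x → 0 ≤ t → mF x t ≠ 0 → 0 < h → mF (x + h) t < mF x t
  F_smul_eq_zero : ∀ {x t l}, 0 ≤ x → 0 ≤ t → mF x t = 0 → 0 ≤ l → l ≤ 1 →
    mF (l * x) (l * t) = 0
  G_smul_eq_zero : ∀ {x t l}, 0 ≤ x → 0 ≤ t → mG x t = 0 → 0 ≤ l → l ≤ 1 →
    mG (l * x) (l * t) = 0

namespace IsInterfacePair

variable {mF mG : ℝ → ℝ → ℝ} {t : ℝ}

theorem smul_eq_zero (P : IsInterfacePair mF mG) {x s l : ℝ} (hx : 0 ≤ x) (hs : 0 ≤ s)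
    (hF : mF x s = 0) (heq : mF x s = mG x s) (hl₀ : 0 ≤ l) (hl₁ : l ≤ 1) :
    mF (l * x) (l * s) = 0 ∧ mG (l * x) (l * s) = 0 :=
  ⟨P.F_smul_eq_zero hx hs hF hl₀ hl₁, P.G_smul_eq_zero hx hs (heq ▸ hF) hl₀ hl₁⟩

theorem eq_zero_of_mem_interior (P : IsInterfacePair mF mG) (ht : 0 ≤ t) {x : ℝ}
    (hx : x ∈ interior {x | 0 ≤ x ∧ mF x t = mG x t}) : mF x t = 0 := by
  obtain ⟨ε, hε, hball⟩ := Metric.mem_nhds_iff.1 (mem_interior_iff_mem_nhds.1 hx)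
  obtain ⟨hx₀, hxeq⟩ := hball (Metric.mem_ball_self hε)
  have hδ : 0 < ε / 2 := half_pos hε
  obtain ⟨-, hx'eq⟩ := hball (show x + ε / 2 ∈ Metric.ball x ε by
    rw [Metric.mem_ball, Real.dist_eq, add_sub_cancel_left, abs_of_pos hδ]
    exact half_lt_self hε)
  by_contra hne
  linarith [P.F_add_lt hx₀ ht hne hδ, P.G_mono ht hx₀ (le_add_of_nonneg_right hδ.le)]

theorem eq_zero_of_le (P : IsInterfacePair mF mG) (ht : 0 < t) {x₀ : ℝ} (hx₀ : 0 ≤ x₀)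
    (hF₀ : mF x₀ t = 0) (heq₀ : mF x₀ t = mG x₀ t) {x s : ℝ} (hx : 0 ≤ x) (hs : 0 ≤ s)
    (hst : s ≤ t) (heq : mF x s = mG x s) : mF x s = 0 := by
  have hl₀ : 0 ≤ s / t := div_nonneg hs ht.le
  obtain ⟨hF, hG⟩ := P.smul_eq_zero hx₀ ht.le hF₀ heq₀ hl₀ ((div_le_one ht).2 hst)
  rw [div_mul_cancel₀ s ht.ne'] at hF hG
  rcases le_total x (s / t * x₀) with h | h
  · linarith [P.F_anti hs hx h, P.F_nonpos x s hx hs]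
  · linarith [P.G_mono hs (mul_nonneg hl₀ hx₀) h, P.G_nonpos x s hx hs]

theorem interior_nonempty_of_lt (P : IsInterfacePair mF mG) (ht : 0 < t)
    (hne : (interior {x | 0 ≤ x ∧ mF x t = mG x t}).Nonempty) {t' : ℝ} (ht'₀ : 0 < t')
    (ht' : t' < t) : (interior {x | 0 ≤ x ∧ mF x t' = mG x t'}).Nonempty := by
  have hl₀ : 0 < t' / t := div_pos ht'₀ ht
  refine (hne.smul_set (a := t' / t)).mono
    (interior_maximal ?_ (isOpen_interior.smul₀ hl₀.ne'))
  rintro _ ⟨x, hx, rfl⟩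
  obtain ⟨hx₀, heq⟩ := interior_subset hx
  obtain ⟨hF, hG⟩ := P.smul_eq_zero hx₀ ht.le (P.eq_zero_of_mem_interior ht.le hx) heq
    hl₀.le ((div_lt_one ht).2 ht').le
  rw [div_mul_cancel₀ t' ht.ne'] at hF hG
  exact ⟨mul_nonneg hl₀.le hx₀, hF.trans hG.symm⟩

theorem starConvex (P : IsInterfacePair mF mG) (ht : 0 < t)
    (hne : (interior {x | 0 ≤ x ∧ mF x t = mG x t}).Nonempty) :
    StarConvex ℝ ((0:ℝ), (0:ℝ))
      {p : ℝ × ℝ | 0 ≤ p.2 ∧ p.2 ≤ t ∧ 0 ≤ p.1 ∧ mF p.1 p.2 = mG p.1 p.2} := by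
  obtain ⟨x₀, hx₀⟩ := hne
  obtain ⟨hx₀0, heq₀⟩ := interior_subset hx₀
  rintro p ⟨hs, hst, hx, heq⟩ a b ha hb hab
  have hb₁ : b ≤ 1 := by linarith
  obtain ⟨hF, hG⟩ := P.smul_eq_zero hx hs
    (P.eq_zero_of_le ht hx₀0 (P.eq_zero_of_mem_interior ht.le hx₀) heq₀ hx hs hst heq) heq hb hb₁
  have hcomb : a • ((0:ℝ), (0:ℝ)) + b • p = (b * p.1, b * p.2) := by ext <;> simp
  rw [hcomb]
  exact ⟨mul_nonneg hb hs, by nlinarith, mul_nonneg hb hx, hF.trans hG.symm⟩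

end IsInterfacePair

theorem integrableOn_Icc_of_nonneg_of_le {ρ : ℝ → ℝ} {K : ℝ} (hmeas : Measurable ρ)
    (hnonneg : ∀ η ∈ Icc (0:ℝ) K, 0 ≤ ρ η) (hM : ∃ M, ∀ η ∈ Icc (0:ℝ) K, ρ η ≤ M) :
    IntegrableOn ρ (Icc 0 K) := by
  obtain ⟨M, hM⟩ := hM
  refine Measure.integrableOn_of_bounded measure_Icc_lt_top.ne hmeas.aestronglyMeasurable
    (M := M) ((ae_restrict_iff' measurableSet_Icc).2 (ae_of_all _ fun η hη => ?_))
  rw [Real.norm_of_nonneg (hnonneg η hη)]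
  exact hM η hη

theorem ae_restrict_Icc_norm_le {f : ℝ → ℝ} {K M : ℝ} (hM : ∀ η, 0 ≤ η → |f η| ≤ M) :
    ∀ᵐ η ∂(volume.restrict (Icc 0 K)), ‖f η‖ ≤ M :=
  (ae_restrict_iff' measurableSet_Icc).2 (ae_of_all _ fun η hη => hM η hη.1)

theorem integral_affine_combination {w₁ w₂ w₃ : ℝ → ℝ} {y : ℝ} (hy : 0 ≤ y)
    (h₁ : IntegrableOn w₁ (Icc 0 y)) (h₂ : IntegrableOn w₂ (Icc 0 y))
    (h₃ : IntegrableOn w₃ (Icc 0 y)) (x t : ℝ) :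
    ∫ η in (0:ℝ)..y, (x * w₁ η + t * w₂ η + η * w₃ η) =
      x * (∫ η in (0:ℝ)..y, w₁ η) + t * (∫ η in (0:ℝ)..y, w₂ η) +
        ∫ η in (0:ℝ)..y, η * w₃ η := by
  have hi : ∀ {w : ℝ → ℝ}, IntegrableOn w (Icc 0 y) → IntervalIntegrable w volume 0 y :=
    (intervalIntegrable_iff_integrableOn_Icc_of_le hy).2
  have h₃' : IntervalIntegrable (fun η => η * w₃ η) volume 0 y :=
    hi (h₃.continuousOn_mul continuousOn_id isCompact_Icc)
  rw [intervalIntegral.integral_add (((hi h₁).const_mul x).add ((hi h₂).const_mul t)) h₃',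
    intervalIntegral.integral_add ((hi h₁).const_mul x) ((hi h₂).const_mul t),
    intervalIntegral.integral_const_mul, intervalIntegral.integral_const_mul]

theorem isAffinePotential_Fpot {ρ0 u0 : ℝ → ℝ} (hρ0 : ∀ K, IntegrableOn ρ0 (Icc 0 K))
    (hu0ρ0 : ∀ K, IntegrableOn (fun η => u0 η * ρ0 η) (Icc 0 K)) :
    IsAffinePotential (Fpot ρ0 u0) (fun y => ∫ η in (0:ℝ)..y, -ρ0 η)
      (fun y => ∫ η in (0:ℝ)..y, u0 η * ρ0 η) (fun y => ∫ η in (0:ℝ)..y, η * ρ0 η) := by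
  intro y hy x t
  beta_reduce
  rw [← integral_affine_combination (w₁ := fun η => -ρ0 η) hy (hρ0 y).neg (hu0ρ0 y) (hρ0 y)]
  exact intervalIntegral.integral_congr fun η _ => by ring

theorem isAffinePotential_Gpot {ρb ub : ℝ → ℝ}
    (hw : ∀ K, IntegrableOn (fun η => ρb η * ub η) (Icc 0 K))
    (hubw : ∀ K, IntegrableOn (fun η => ub η * (ρb η * ub η)) (Icc 0 K)) :
    IsAffinePotential (Gpot ρb ub) (fun y => ∫ η in (0:ℝ)..y, ρb η * ub η)
      (fun y => ∫ η in (0:ℝ)..y, -(ub η * (ρb η * ub η)))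
      (fun y => ∫ η in (0:ℝ)..y, η * (ub η * (ρb η * ub η))) := by
  intro y hy x t
  beta_reduce
  rw [← integral_affine_combination (w₂ := fun η => -(ub η * (ρb η * ub η))) hy (hw y)
    (hubw y).neg (hubw y)]
  exact intervalIntegral.integral_congr fun η _ => by ring

theorem isInterfacePair_of_isMinValue {ρ0 u0 ρb ub : ℝ → ℝ} {Fm Gm : ℝ → ℝ → ℝ}
    (hρ0 : ∀ K, IntegrableOn ρ0 (Icc 0 K))
    (hu0ρ0 : ∀ K, IntegrableOn (fun η => u0 η * ρ0 η) (Icc 0 K))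
    (hw : ∀ K, IntegrableOn (fun η => ρb η * ub η) (Icc 0 K))
    (hubw : ∀ K, IntegrableOn (fun η => ub η * (ρb η * ub η)) (Icc 0 K))
    (hρ0pos : ∀ η, 0 ≤ η → 0 < ρ0 η) (hρbpos : ∀ η, 0 ≤ η → 0 < ρb η)
    (hubpos : ∀ η, 0 ≤ η → 0 < ub η)
    (hFm : ∀ x t, 0 ≤ x → 0 ≤ t → IsMinValue (fun y => Fpot ρ0 u0 y x t) (Fm x t))
    (hGm : ∀ x t, 0 ≤ x → 0 ≤ t → IsMinValue (fun τ => Gpot ρb ub τ x t) (Gm x t)) :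
    IsInterfacePair Fm Gm := by
  have hF := isAffinePotential_Fpot hρ0 hu0ρ0
  have hG := isAffinePotential_Gpot hw hubw
  have hF0 (x t : ℝ) : Fpot ρ0 u0 0 x t = 0 := by simp [Fpot]
  have hG0 (x t : ℝ) : Gpot ρb ub 0 x t = 0 := by simp [Gpot]
  have hρ0int y (hy : 0 < y) : 0 < ∫ η in (0:ℝ)..y, ρ0 η :=
    intervalIntegral.intervalIntegral_pos_of_pos_on
      ((intervalIntegrable_iff_integrableOn_Icc_of_le hy.le).2 (hρ0 y))
      (fun η hη => hρ0pos η hη.1.le) hy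
  have hwpos η (hη : 0 ≤ η) : 0 < ρb η * ub η := mul_pos (hρbpos η hη) (hubpos η hη)
  exact
    { F_nonpos := fun x t hx ht => (hFm x t hx ht).nonpos (hF0 x t)
      G_nonpos := fun x t hx ht => (hGm x t hx ht).nonpos (hG0 x t)
      F_anti := hF.minValue_anti (fun y hy => by
        rw [intervalIntegral.integral_neg, neg_nonpos]
        exact intervalIntegral.integral_nonneg hy fun η hη => (hρ0pos η hη.1).le) hFm
      G_mono := hG.minValue_mono (fun y hy =>
        intervalIntegral.integral_nonneg hy fun η hη => (hwpos η hη.1).le) hGm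
      F_add_lt := hF.minValue_add_lt (fun y hy => by
        rw [intervalIntegral.integral_neg, neg_neg_iff_pos]
        exact hρ0int y hy) hF0 hFm
      F_smul_eq_zero := hF.minValue_smul_eq_zero (fun y hy => intervalIntegral.integral_nonneg hy
        fun η hη => mul_nonneg hη.1 (hρ0pos η hη.1).le) hF0 hFm
      G_smul_eq_zero := hG.minValue_smul_eq_zero (fun y hy => intervalIntegral.integral_nonneg hy
        fun η hη => mul_nonneg hη.1 (mul_nonneg (hubpos η hη.1).le (hwpos η hη.1).le)) hG0 hGm }

theorem stmt8
    (ρ0 u0 ρb ub : ℝ → ℝ)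
    (hρ0meas : Measurable ρ0) (hu0meas : Measurable u0)
    (hρbmeas : Measurable ρb) (hubmeas : Measurable ub)
    (hρ0pos : ∀ η, 0 ≤ η → 0 < ρ0 η)
    (hρbpos : ∀ η, 0 ≤ η → 0 < ρb η)
    (hubpos : ∀ η, 0 ≤ η → 0 < ub η)
    (hρ0loc : ∀ K : ℝ, ∃ M : ℝ, ∀ η ∈ Set.Icc (0:ℝ) K, ρ0 η ≤ M)
    (hρbloc : ∀ K : ℝ, ∃ M : ℝ, ∀ η ∈ Set.Icc (0:ℝ) K, ρb η ≤ M)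
    (hu0bdd : ∃ M : ℝ, ∀ η, 0 ≤ η → |u0 η| ≤ M)
    (hubbdd : ∃ M : ℝ, ∀ η, 0 ≤ η → |ub η| ≤ M)
    (Fm Gm : ℝ → ℝ → ℝ)
    (hFm : ∀ x t, 0 ≤ x → 0 ≤ t → IsMinValue (fun y => Fpot ρ0 u0 y x t) (Fm x t))
    (hGm : ∀ x t, 0 ≤ x → 0 ≤ t → IsMinValue (fun τ => Gpot ρb ub τ x t) (Gm x t))
    (t : ℝ) (ht : 0 < t)
    (hne : (interior {x : ℝ | 0 ≤ x ∧ Fm x t = Gm x t}).Nonempty) :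
    (∀ t', 0 < t' → t' < t →
      (interior {x : ℝ | 0 ≤ x ∧ Fm x t' = Gm x t'}).Nonempty) ∧
    StarConvex ℝ ((0:ℝ), (0:ℝ))
      {p : ℝ × ℝ | 0 ≤ p.2 ∧ p.2 ≤ t ∧ 0 ≤ p.1 ∧ Fm p.1 p.2 = Gm p.1 p.2} := by
  obtain ⟨Mu, hMu⟩ := hu0bdd
  obtain ⟨Mub, hMub⟩ := hubbdd
  have hρ0 K := integrableOn_Icc_of_nonneg_of_le hρ0meas
    (fun η hη => (hρ0pos η hη.1).le) (hρ0loc K)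
  have hw K := (integrableOn_Icc_of_nonneg_of_le hρbmeas
    (fun η hη => (hρbpos η hη.1).le) (hρbloc K)).mul_bdd
    hubmeas.aestronglyMeasurable (ae_restrict_Icc_norm_le hMub)
  have P := isInterfacePair_of_isMinValue hρ0
    (fun K => (hρ0 K).bdd_mul hu0meas.aestronglyMeasurable (ae_restrict_Icc_norm_le hMu)) hw
    (fun K => (hw K).bdd_mul hubmeas.aestronglyMeasurable (ae_restrict_Icc_norm_le hMub))
    hρ0pos hρbpos hubpos hFm hGm
  exact ⟨fun t' => P.interior_nonempty_of_lt ht hne, P.starConvex ht hne⟩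
end

section
/- If for some t′ > 0 the set I(t′) = {x ≥ 0 : F(x,t′) = G(x,t′)} is a nonempty singleton, then for every t > t′ the set I(t) = {x ≥ 0 : F(x,t) = G(x,t)} contains at most one point. -/
/-!
Both potentials are affine in `(x, t)`: `F(y,x,t) = t A(y) + B(y) - x R(y)` and
`G(τ,x,t) = x P(τ) - t Q(τ) + S(τ)` with `B, R, P, S ≥ 0` and `R(y) > 0` for `y > 0`.
Hence `x ↦ F(x,t)` is nonincreasing, strictly so where it is negative, and `x ↦ G(x,t)` is
nondecreasing; if `x₁ < x₂` both lie in `I(t)`, the common value is forced to be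
`F(x₂,t) = G(x₁,t) = 0`. For `r = t'/t ∈ (0,1]` the affine form gives
`F(y,x,t') ≥ r F(y,x₂,t) ≥ 0` for `x ≤ r x₂` and `G(τ,x,t') ≥ r G(τ,x₁,t) ≥ 0` for `x ≥ r x₁`,
and both potentials vanish at `0`, so the whole interval `[r x₁, r x₂]` lies in `I(t')`.
-/

open MeasureTheory Set Filter

section Integrability

variable {μ : Measure ℝ} {f g : ℝ → ℝ} {a b C : ℝ}

lemma IntervalIntegrable.bdd_mul_of_abs_le (hg : IntervalIntegrable g μ a b)
    (hf : AEStronglyMeasurable f μ) (hC : ∀ η ∈ uIcc a b, |f η| ≤ C) :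
    IntervalIntegrable (fun η => f η * g η) μ a b := by
  rw [intervalIntegrable_iff] at hg ⊢
  refine hg.bdd_mul (c := C) hf.restrict ?_
  filter_upwards [ae_restrict_mem measurableSet_uIoc] with η hη
  exact hC η (uIoc_subset_uIcc hη)

lemma intervalIntegrable_of_abs_le_s9 [IsLocallyFiniteMeasure μ] (hf : AEStronglyMeasurable f μ)
    (hC : ∀ η ∈ uIcc a b, |f η| ≤ C) : IntervalIntegrable f μ a b := by
  simpa using (intervalIntegrable_const (c := (1 : ℝ))).bdd_mul_of_abs_le hf hC

end Integrability

namespace IsMinValue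

variable {f g f₁ f₂ g₁ g₂ : ℝ → ℝ} {v c₁ c₂ r : ℝ}

lemma mono (hf : IsMinValue f c₁) (hg : IsMinValue g c₂)
    (hfg : ∀ b, 0 ≤ b → f b ≤ g b) : c₁ ≤ c₂ := by
  obtain ⟨a, ha, rfl⟩ := hg.1
  exact (hf.2 a ha).trans (hfg a ha)

lemma eq_zero_of_lt_of_le (hf₁ : IsMinValue f₁ c₁) (hf₂ : IsMinValue f₂ c₂)
    (hg₁ : IsMinValue g₁ c₁) (hg₂ : IsMinValue g₂ c₂) (hf₁₀ : f₁ 0 = 0) (hf₂₀ : f₂ 0 = 0)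
    (hf : ∀ b, 0 < b → f₂ b < f₁ b) (hg : ∀ b, 0 ≤ b → g₁ b ≤ g₂ b) :
    c₁ = 0 ∧ c₂ = 0 := by
  have hc : c₁ ≤ c₂ := hg₁.mono hg₂ hg
  obtain ⟨a, ha, rfl⟩ := hf₁.1
  obtain rfl | ha := ha.eq_or_lt
  · have := hf₂.2 0 le_rfl
    constructor <;> linarith
  · exact absurd ((hf₂.2 a ha.le).trans_lt (hf a ha)) hc.not_gt

lemma eq_zero_of_mul_le (hf : IsMinValue f 0) (hg : IsMinValue g v) (hg₀ : g 0 = 0)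
    (hr : 0 ≤ r) (hfg : ∀ b, 0 ≤ b → r * f b ≤ g b) : v = 0 := by
  obtain ⟨a, ha, rfl⟩ := hg.1
  linarith [hg.2 0 le_rfl, hfg a ha, mul_nonneg hr (hf.2 a ha)]

end IsMinValue

section Potentials

variable {ρ0 u0 ρb ub : ℝ → ℝ} {y τ x x₁ x₂ t r : ℝ}

@[simp] lemma Fpot_zero_left : Fpot ρ0 u0 0 x t = 0 := intervalIntegral.integral_same

@[simp] lemma Gpot_zero_left : Gpot ρb ub 0 x t = 0 := intervalIntegral.integral_same

lemma Fpot_eq (hρ : IntervalIntegrable ρ0 volume 0 y)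
    (huρ : IntervalIntegrable (fun η => u0 η * ρ0 η) volume 0 y) :
    Fpot ρ0 u0 y x t = t * (∫ η in 0..y, u0 η * ρ0 η) + (∫ η in 0..y, η * ρ0 η)
      - x * ∫ η in 0..y, ρ0 η := by
  have hηρ : IntervalIntegrable (fun η => η * ρ0 η) volume 0 y :=
    hρ.continuousOn_mul continuousOn_id
  rw [← intervalIntegral.integral_const_mul, ← intervalIntegral.integral_const_mul,
    ← intervalIntegral.integral_add (huρ.const_mul t) hηρ,
    ← intervalIntegral.integral_sub ((huρ.const_mul t).add hηρ) (hρ.const_mul x), Fpot]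
  congr 1
  ext η
  ring

lemma Gpot_eq (hw : IntervalIntegrable (fun η => ρb η * ub η) volume 0 τ)
    (hv : IntervalIntegrable (fun η => ub η * (ρb η * ub η)) volume 0 τ) :
    Gpot ρb ub τ x t = x * (∫ η in 0..τ, ρb η * ub η)
      - t * (∫ η in 0..τ, ub η * (ρb η * ub η)) + ∫ η in 0..τ, η * (ub η * (ρb η * ub η)) := by
  have hηv : IntervalIntegrable (fun η => η * (ub η * (ρb η * ub η))) volume 0 τ :=
    hv.continuousOn_mul continuousOn_id
  rw [← intervalIntegral.integral_const_mul, ← intervalIntegral.integral_const_mul,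
    ← intervalIntegral.integral_sub (hw.const_mul x) (hv.const_mul t),
    ← intervalIntegral.integral_add ((hw.const_mul x).sub (hv.const_mul t)) hηv, Gpot]
  congr 1
  ext η
  ring

lemma Fpot_lt_Fpot (hρ : ∀ y, 0 ≤ y → IntervalIntegrable ρ0 volume 0 y)
    (huρ : ∀ y, 0 ≤ y → IntervalIntegrable (fun η => u0 η * ρ0 η) volume 0 y)
    (hρ₀ : ∀ η, 0 ≤ η → 0 < ρ0 η) (hx : x₁ < x₂) (hy : 0 < y) :
    Fpot ρ0 u0 y x₂ t < Fpot ρ0 u0 y x₁ t := by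
  have hR : 0 < ∫ η in 0..y, ρ0 η :=
    intervalIntegral.intervalIntegral_pos_of_pos_on (hρ y hy.le) (fun η hη => hρ₀ η hη.1.le) hy
  rw [Fpot_eq (hρ y hy.le) (huρ y hy.le), Fpot_eq (hρ y hy.le) (huρ y hy.le)]
  nlinarith

lemma mul_Fpot_le_Fpot (hρ : ∀ y, 0 ≤ y → IntervalIntegrable ρ0 volume 0 y)
    (huρ : ∀ y, 0 ≤ y → IntervalIntegrable (fun η => u0 η * ρ0 η) volume 0 y)
    (hρ₀ : ∀ η, 0 ≤ η → 0 ≤ ρ0 η) (hr : r ≤ 1) (hx : x ≤ r * x₂) (hy : 0 ≤ y) :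
    r * Fpot ρ0 u0 y x₂ t ≤ Fpot ρ0 u0 y x (r * t) := by
  have hR : 0 ≤ ∫ η in 0..y, ρ0 η := intervalIntegral.integral_nonneg hy fun η hη => hρ₀ η hη.1
  have hB : 0 ≤ ∫ η in 0..y, η * ρ0 η :=
    intervalIntegral.integral_nonneg hy fun η hη => mul_nonneg hη.1 (hρ₀ η hη.1)
  rw [Fpot_eq (hρ y hy) (huρ y hy), Fpot_eq (hρ y hy) (huρ y hy)]
  linear_combination mul_nonneg (sub_nonneg.2 hr) hB + mul_nonneg (sub_nonneg.2 hx) hR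

lemma Gpot_le_Gpot (hw : ∀ τ, 0 ≤ τ → IntervalIntegrable (fun η => ρb η * ub η) volume 0 τ)
    (hv : ∀ τ, 0 ≤ τ → IntervalIntegrable (fun η => ub η * (ρb η * ub η)) volume 0 τ)
    (hρb : ∀ η, 0 ≤ η → 0 ≤ ρb η) (hub : ∀ η, 0 ≤ η → 0 ≤ ub η) (hx : x₁ ≤ x₂) (hτ : 0 ≤ τ) :
    Gpot ρb ub τ x₁ t ≤ Gpot ρb ub τ x₂ t := by
  have hP : 0 ≤ ∫ η in 0..τ, ρb η * ub η :=
    intervalIntegral.integral_nonneg hτ fun η hη => mul_nonneg (hρb η hη.1) (hub η hη.1)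
  rw [Gpot_eq (hw τ hτ) (hv τ hτ), Gpot_eq (hw τ hτ) (hv τ hτ)]
  nlinarith

lemma mul_Gpot_le_Gpot (hw : ∀ τ, 0 ≤ τ → IntervalIntegrable (fun η => ρb η * ub η) volume 0 τ)
    (hv : ∀ τ, 0 ≤ τ → IntervalIntegrable (fun η => ub η * (ρb η * ub η)) volume 0 τ)
    (hρb : ∀ η, 0 ≤ η → 0 ≤ ρb η) (hub : ∀ η, 0 ≤ η → 0 ≤ ub η) (hr : r ≤ 1)
    (hx : r * x₁ ≤ x) (hτ : 0 ≤ τ) :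
    r * Gpot ρb ub τ x₁ t ≤ Gpot ρb ub τ x (r * t) := by
  have hP : 0 ≤ ∫ η in 0..τ, ρb η * ub η :=
    intervalIntegral.integral_nonneg hτ fun η hη => mul_nonneg (hρb η hη.1) (hub η hη.1)
  have hS : 0 ≤ ∫ η in 0..τ, η * (ub η * (ρb η * ub η)) :=
    intervalIntegral.integral_nonneg hτ fun η hη =>
      mul_nonneg hη.1 (mul_nonneg (hub η hη.1) (mul_nonneg (hρb η hη.1) (hub η hη.1)))
  rw [Gpot_eq (hw τ hτ) (hv τ hτ), Gpot_eq (hw τ hτ) (hv τ hτ)]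
  linear_combination mul_nonneg (sub_nonneg.2 hx) hP + mul_nonneg (sub_nonneg.2 hr) hS

end Potentials

section

variable {ρ0 u0 ρb ub : ℝ → ℝ}

lemma intervalIntegrable_initial (hρ0meas : Measurable ρ0) (hu0meas : Measurable u0)
    (hρ0pos : ∀ η, 0 ≤ η → 0 < ρ0 η) (hρ0loc : ∀ K : ℝ, ∃ M : ℝ, ∀ η ∈ Icc 0 K, ρ0 η ≤ M)
    (hu0bdd : ∃ M : ℝ, ∀ η, 0 ≤ η → |u0 η| ≤ M) :
    (∀ y, 0 ≤ y → IntervalIntegrable ρ0 volume 0 y) ∧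
      ∀ y, 0 ≤ y → IntervalIntegrable (fun η => u0 η * ρ0 η) volume 0 y := by
  have hρ0 : ∀ y, 0 ≤ y → IntervalIntegrable ρ0 volume 0 y := by
    intro y hy
    obtain ⟨M, hM⟩ := hρ0loc y
    refine intervalIntegrable_of_abs_le_s9 hρ0meas.aestronglyMeasurable (C := M) fun η hη => ?_
    rw [uIcc_of_le hy] at hη
    exact (abs_of_pos (hρ0pos η hη.1)).trans_le (hM η hη)
  obtain ⟨M, hM⟩ := hu0bdd
  exact ⟨hρ0, fun y hy => (hρ0 y hy).bdd_mul_of_abs_le hu0meas.aestronglyMeasurable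
    fun η hη => hM η (uIcc_of_le hy ▸ hη).1⟩

lemma intervalIntegrable_boundary (hρbmeas : Measurable ρb) (hubmeas : Measurable ub)
    (hρbpos : ∀ η, 0 ≤ η → 0 < ρb η)
    (hρbloc : ∀ K : ℝ, ∃ M : ℝ, ∀ η ∈ Icc 0 K, ρb η ≤ M)
    (hubbdd : ∃ M : ℝ, ∀ η, 0 ≤ η → |ub η| ≤ M) :
    (∀ τ, 0 ≤ τ → IntervalIntegrable (fun η => ρb η * ub η) volume 0 τ) ∧
      ∀ τ, 0 ≤ τ → IntervalIntegrable (fun η => ub η * (ρb η * ub η)) volume 0 τ := by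
  obtain ⟨M, hM⟩ := hubbdd
  have hub : ∀ τ, 0 ≤ τ → ∀ η ∈ uIcc 0 τ, |ub η| ≤ M := fun τ hτ η hη =>
    hM η (uIcc_of_le hτ ▸ hη).1
  have hw : ∀ τ, 0 ≤ τ → IntervalIntegrable (fun η => ρb η * ub η) volume 0 τ := by
    intro τ hτ
    obtain ⟨Mρ, hMρ⟩ := hρbloc τ
    have hρb : IntervalIntegrable ρb volume 0 τ :=
      intervalIntegrable_of_abs_le_s9 hρbmeas.aestronglyMeasurable (C := Mρ) fun η hη => by
        rw [uIcc_of_le hτ] at hη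
        exact (abs_of_pos (hρbpos η hη.1)).trans_le (hMρ η hη)
    simpa only [mul_comm] using hρb.bdd_mul_of_abs_le hubmeas.aestronglyMeasurable (hub τ hτ)
  exact ⟨hw, fun τ hτ => (hw τ hτ).bdd_mul_of_abs_le hubmeas.aestronglyMeasurable (hub τ hτ)⟩

end

theorem stmt9
    (ρ0 u0 ρb ub : ℝ → ℝ)
    (hρ0meas : Measurable ρ0) (hu0meas : Measurable u0)
    (hρbmeas : Measurable ρb) (hubmeas : Measurable ub)
    (hρ0pos : ∀ η, 0 ≤ η → 0 < ρ0 η)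
    (hρbpos : ∀ η, 0 ≤ η → 0 < ρb η)
    (hubpos : ∀ η, 0 ≤ η → 0 < ub η)
    (hρ0loc : ∀ K : ℝ, ∃ M : ℝ, ∀ η ∈ Set.Icc (0:ℝ) K, ρ0 η ≤ M)
    (hρbloc : ∀ K : ℝ, ∃ M : ℝ, ∀ η ∈ Set.Icc (0:ℝ) K, ρb η ≤ M)
    (hu0bdd : ∃ M : ℝ, ∀ η, 0 ≤ η → |u0 η| ≤ M)
    (hubbdd : ∃ M : ℝ, ∀ η, 0 ≤ η → |ub η| ≤ M)
    (Fm Gm : ℝ → ℝ → ℝ)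
    (hFm : ∀ x t, 0 ≤ x → 0 ≤ t → IsMinValue (fun y => Fpot ρ0 u0 y x t) (Fm x t))
    (hGm : ∀ x t, 0 ≤ x → 0 ≤ t → IsMinValue (fun τ => Gpot ρb ub τ x t) (Gm x t))
    (t' : ℝ) (ht' : 0 < t')
    (hsing : ∃ x₀ : ℝ, {x : ℝ | 0 ≤ x ∧ Fm x t' = Gm x t'} = {x₀}) :
    ∀ t, t' < t → {x : ℝ | 0 ≤ x ∧ Fm x t = Gm x t}.Subsingleton := by
  obtain ⟨hρ0int, hu0ρ0int⟩ := intervalIntegrable_initial hρ0meas hu0meas hρ0pos hρ0loc hu0bdd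
  obtain ⟨hwint, hvint⟩ := intervalIntegrable_boundary hρbmeas hubmeas hρbpos hρbloc hubbdd
  have hρb₀ : ∀ η, 0 ≤ η → 0 ≤ ρb η := fun η hη => (hρbpos η hη).le
  have hub₀ : ∀ η, 0 ≤ η → 0 ≤ ub η := fun η hη => (hubpos η hη).le
  intro t ht x₁ hx₁ x₂ hx₂
  by_contra hne
  wlog hlt : x₁ < x₂ generalizing x₁ x₂
  · exact this hx₂ hx₁ (Ne.symm hne) ((not_lt.1 hlt).lt_of_ne' hne)
  have ht₀ : 0 ≤ t := (ht'.trans ht).le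
  have hx₂₀ : 0 ≤ x₂ := hx₁.1.trans hlt.le
  obtain ⟨hF₁, hF₂⟩ := IsMinValue.eq_zero_of_lt_of_le (hFm x₁ t hx₁.1 ht₀) (hFm x₂ t hx₂₀ ht₀)
    (hx₁.2 ▸ hGm x₁ t hx₁.1 ht₀) (hx₂.2 ▸ hGm x₂ t hx₂₀ ht₀) Fpot_zero_left Fpot_zero_left
    (fun _ => Fpot_lt_Fpot hρ0int hu0ρ0int hρ0pos hlt)
    (fun _ => Gpot_le_Gpot hwint hvint hρb₀ hub₀ hlt.le)
  obtain ⟨r, hr₀, hr₁, rfl⟩ : ∃ r, 0 < r ∧ r ≤ 1 ∧ t' = r * t :=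
    ⟨t' / t, div_pos ht' (ht'.trans ht), (div_le_one (ht'.trans ht)).2 ht.le,
      (div_mul_cancel₀ t' (ht'.trans ht).ne').symm⟩
  have hI : ∀ x, r * x₁ ≤ x → x ≤ r * x₂ →
      x ∈ {x : ℝ | 0 ≤ x ∧ Fm x (r * t) = Gm x (r * t)} := by
    intro x h₁ h₂
    have hx : 0 ≤ x := (mul_nonneg hr₀.le hx₁.1).trans h₁
    have hFx : Fm x (r * t) = 0 :=
      (hF₂ ▸ hFm x₂ t hx₂₀ ht₀ : IsMinValue _ 0).eq_zero_of_mul_le (hFm x (r * t) hx ht'.le)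
        Fpot_zero_left hr₀.le fun _ => mul_Fpot_le_Fpot hρ0int hu0ρ0int
          (fun η hη => (hρ0pos η hη).le) hr₁ h₂
    have hGx : Gm x (r * t) = 0 :=
      (hF₁ ▸ hx₁.2 ▸ hGm x₁ t hx₁.1 ht₀ : IsMinValue _ 0).eq_zero_of_mul_le
        (hGm x (r * t) hx ht'.le) Gpot_zero_left hr₀.le
        fun _ => mul_Gpot_le_Gpot hwint hvint hρb₀ hub₀ hr₁ h₁
    exact ⟨hx, hFx.trans hGx.symm⟩
  obtain ⟨x₀, hx₀⟩ := hsing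
  have h₁ := hI (r * x₁) le_rfl (mul_le_mul_of_nonneg_left hlt.le hr₀.le)
  have h₂ := hI (r * x₂) (mul_le_mul_of_nonneg_left hlt.le hr₀.le) le_rfl
  rw [hx₀] at h₁ h₂
  exact hne (mul_left_cancel₀ hr₀.ne' (h₁.trans h₂.symm))
end
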